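/- Let R be a finite commutative ring with identity admitting a generating character. Then for every submodule C ⊆ Rⁿ, the double dot-product dual satisfies (C^⊥⊥)^⊥⊥ = C, where C^⊥⊥ = {v ∈ Rⁿ : v·a = 0 for all a ∈ C}. -/

import Mathlib

open Finset
open scoped Classical

variable {R : Type*} [CommRing R] [Fintype R]

/-- `χ` is a generating character of the finite commutative ring `R`:  the map `r ↦ r·χ`
(where `(r·χ)(a) = χ(r·a)`) is an `R`-module isomorphism from `R` to the character module
`R̂` (bijective, additive, and compatible with the scalar multiplications). -/
def IsGeneratingChar (χ : AddChar R ℂ) : Prop :=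
  Function.Bijective (fun r : R => χ.mulShift r) ∧
  (∀ r s : R, χ.mulShift (r + s) = χ.mulShift r * χ.mulShift s) ∧
  (∀ r s a : R, χ.mulShift (r * s) a = χ.mulShift s (r * a))

/-- The character `χ_v : a ↦ χ(v·a)` of `(Rⁿ, +)`, where `v·a = Σ_i v_i a_i` is the dot
product. -/
noncomputable def dotChar {n : ℕ} (χ : AddChar R ℂ) (v : Fin n → R) :
    AddChar (Fin n → R) ℂ :=
  χ.compAddMonoidHom
    { toFun := fun a => ∑ i, v i * a i
      map_zero' := by simp
      map_add' := fun a b => by simp [mul_add, Finset.sum_add_distrib] }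

/-- The dot-product dual `S^⊥⊥ = {v ∈ Rⁿ : v·a = 0 for all a ∈ S}` of a set `S ⊆ Rⁿ`. -/
def dotDual {n : ℕ} (S : Set (Fin n → R)) : Set (Fin n → R) :=
  {v : Fin n → R | ∀ a ∈ S, ∑ i, v i * a i = 0}

/-
Clearly `C ⊆ (C^⊥⊥)^⊥⊥`. Conversely, if `v ∉ C`, characters of the finite group `Rⁿ/C` separate
points, so some character `ψ` of `Rⁿ` is trivial on `C` but not at `v`. Since `χ` is generating,
`ψ = (a ↦ χ(w·a))` for some `w`; as `C` is a submodule, `χ(r (w·a)) = 1` for every `r` and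
`a ∈ C`, which forces `w·a = 0`, i.e. `w ∈ C^⊥⊥`. But `χ(w·v) = ψ v ≠ 1`, so `v ∉ (C^⊥⊥)^⊥⊥`.
-/

lemma AddChar.map_sum_eq_prod {A M ι : Type*} [AddCommMonoid A] [CommMonoid M]
    (ψ : AddChar A M) (s : Finset ι) (f : ι → A) : ψ (∑ i ∈ s, f i) = ∏ i ∈ s, ψ (f i) := by
  induction s using Finset.cons_induction with
  | empty => simp
  | cons i s _ ih => rw [Finset.sum_cons, Finset.prod_cons, AddChar.map_add_eq_mul, ih]

lemma AddChar.exists_forall_mem_eq_one_apply_ne_one {G : Type*} [AddCommGroup G] [Finite G]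
    {H : AddSubgroup G} {a : G} (ha : a ∉ H) :
    ∃ ψ : AddChar G ℂ, (∀ b ∈ H, ψ b = 1) ∧ ψ a ≠ 1 := by
  obtain ⟨φ, hφ⟩ := AddChar.exists_apply_ne_zero.2 ((QuotientAddGroup.eq_zero_iff a).not.2 ha)
  exact ⟨φ.compAddMonoidHom (QuotientAddGroup.mk' H),
    fun b hb => by simp [(QuotientAddGroup.eq_zero_iff b).2 hb], hφ⟩

section DotProduct

omit [Fintype R]

variable {n : ℕ}

lemma dotChar_apply (χ : AddChar R ℂ) (v a : Fin n → R) :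
    dotChar χ v a = χ (∑ i, v i * a i) := rfl

lemma subset_dotDual_dotDual (S : Set (Fin n → R)) : S ⊆ dotDual (dotDual S) :=
  fun v hv a ha => by simpa only [mul_comm] using ha v hv

lemma dotChar_surjective {χ : AddChar R ℂ} (hχ : Function.Surjective χ.mulShift) :
    Function.Surjective (dotChar (n := n) χ) := by
  intro ψ
  choose v hv using fun i => hχ (ψ.compAddMonoidHom (AddMonoidHom.single (fun _ => R) i))
  refine ⟨v, DFunLike.ext _ _ fun a => ?_⟩
  calc dotChar χ v a = ∏ i, χ.mulShift (v i) (a i) := by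
        simp only [dotChar_apply, AddChar.map_sum_eq_prod, AddChar.mulShift_apply]
    _ = ∏ i, ψ (Pi.single i (a i)) := by simp only [hv, AddChar.compAddMonoidHom_apply,
        AddMonoidHom.single_apply]
    _ = ψ a := by rw [← AddChar.map_sum_eq_prod, Finset.univ_sum_single]

lemma mem_dotDual_iff_forall_dotChar_eq_one {χ : AddChar R ℂ}
    (hχ : Function.Injective χ.mulShift) (C : Submodule R (Fin n → R)) (v : Fin n → R) :
    v ∈ dotDual (C : Set (Fin n → R)) ↔ ∀ a ∈ C, dotChar χ v a = 1 := by
  refine ⟨fun hv a ha => by rw [dotChar_apply, hv a ha, AddChar.map_zero_eq_one], fun h a ha => ?_⟩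
  refine hχ (DFunLike.ext _ _ fun r => ?_)
  have hra := h (r • a) (C.smul_mem r ha)
  simp only [dotChar_apply, Pi.smul_apply, smul_eq_mul, mul_left_comm _ r, ← Finset.mul_sum]
    at hra
  rw [AddChar.mulShift_apply, AddChar.mulShift_apply, zero_mul, AddChar.map_zero_eq_one,
    mul_comm, hra]

end DotProduct

/-- **Double annihilator property.**  If the finite commutative ring `R` admits a
generating character, then every submodule `C ⊆ Rⁿ` satisfies `(C^⊥⊥)^⊥⊥ = C`. -/
theorem dotDual_dotDual (n : ℕ) (hex : ∃ χ : AddChar R ℂ, IsGeneratingChar χ)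
    (C : Submodule R (Fin n → R)) :
    dotDual (dotDual (C : Set (Fin n → R))) = (C : Set (Fin n → R)) := by
  obtain ⟨χ, hχ, -⟩ := hex
  refine Set.Subset.antisymm (fun v hv => ?_) (subset_dotDual_dotDual _)
  by_contra hvC
  obtain ⟨ψ, hψC, hψv⟩ :=
    AddChar.exists_forall_mem_eq_one_apply_ne_one (H := C.toAddSubgroup) hvC
  obtain ⟨w, rfl⟩ := dotChar_surjective hχ.surjective ψ
  have hw := (mem_dotDual_iff_forall_dotChar_eq_one hχ.injective C w).2 hψC
  apply hψv
  rw [dotChar_apply, ← AddChar.map_zero_eq_one χ, ← hv w hw]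
  simp only [mul_comm]
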